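/- Let κ be a positive integer, let G = (V,E) be a finite simple graph with no isolated vertices in which every odd cycle has length at least 2κ+1, let C be a minimum edge cover of G, and let y : V → ℚ be defined from int as in the context. Then y_u + y_v ≤ 1 for every edge (u,v) ∈ E. -/

import Mathlib

open SimpleGraph Finset

variable {V : Type*} [Fintype V] [DecidableEq V]

/-- `C` is an edge cover of `G`: a set of edges of `G` such that every vertex is
incident to at least one edge of `C`. -/
def IsEdgeCover (G : SimpleGraph V) (C : Set (Sym2 V)) : Prop :=
  C ⊆ G.edgeSet ∧ ∀ v : V, ∃ e ∈ C, v ∈ e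

/-- A vertex is tight w.r.t. `C` if it is incident to exactly one edge of `C`. -/
def IsTight (C : Set (Sym2 V)) (v : V) : Prop :=
  {e ∈ C | v ∈ e}.ncard = 1

/-- A vertex is loose w.r.t. `C` if it is not tight. -/
def IsLoose (C : Set (Sym2 V)) (v : V) : Prop :=
  ¬ IsTight C v

/-- `p` is an interchanging path w.r.t. the edge cover `C`: a simple path starting at a
loose vertex whose first edge lies in `C` and such that exactly one of any two
consecutive edges lies in `C`. (The trivial path at a loose vertex is interchanging.) -/
def IsInterchanging (G : SimpleGraph V) (C : Set (Sym2 V)) {u v : V} (p : G.Walk u v) :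
    Prop :=
  p.IsPath ∧ IsLoose C u ∧
    (∀ h : 0 < p.edges.length, p.edges[0]'h ∈ C) ∧
    (∀ i : ℕ, ∀ h : i + 1 < p.edges.length,
      ((p.edges[i]'(Nat.lt_of_succ_lt h) ∈ C) ↔ (p.edges[i + 1]'h ∉ C)))

/-- `int(v)`: the length of a shortest interchanging path ending at `v` (`∞` if none). -/
noncomputable def intDist (G : SimpleGraph V) (C : Set (Sym2 V)) (v : V) : ℕ∞ :=
  ⨅ (u : V) (p : G.Walk u v) (_ : IsInterchanging G C p), (p.length : ℕ∞)

/-- The dual assignment `y` defined from `int`: `y v = int(v)/(2(κ+1))` if `int(v) < κ`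
is even, `y v = 1 - (int(v)+1)/(2(κ+1))` if `int(v) < κ` is odd, and
`y v = ⌈κ/2⌉/(κ+1)` otherwise. -/
noncomputable def yEC (G : SimpleGraph V) (C : Set (Sym2 V)) (κ : ℕ) (v : V) : ℚ :=
  if intDist G C v < (κ : ℕ∞) then
    (if Even (intDist G C v).toNat then
      ((intDist G C v).toNat : ℚ) / (2 * (κ + 1))
    else
      1 - (((intDist G C v).toNat : ℚ) + 1) / (2 * (κ + 1)))
  else
    (⌈(κ : ℚ) / 2⌉ : ℚ) / (κ + 1)

/-!
For an edge `uv`, write `a = int(u)` and `b = int(v)`. Extending a shortest interchanging path to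
`u` by the edge `uv` (or cutting it at `v`) shows `int(v) ≤ a + 1` whenever `a` is odd, which
settles every case except `a`, `b` both odd and `< κ`. That case is impossible: if `uv ∈ C`, the
tight vertex `u` must be reached through `v`, so `b < a`, and symmetrically `a < b`; if `uv ∉ C`,
the two odd paths joined through `uv` would form an odd interchanging path between loose vertices,
whose symmetric difference with `C` is a smaller edge cover, unless they meet. At a meeting point
`w`, either the prefixes up to `w` have equal parity and the remaining pieces close an odd walk of
length at most `a + b + 1`, which contains an odd cycle, so `a + b ≥ 2κ`; or dropping the last edge
of the even prefix leaves a shorter pair of odd paths across an edge outside `C`, and we induct.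
-/

open scoped symmDiff

section

variable {α : Type*}

theorem Set.ncard_symmDiff_add_two_mul_ncard_inter {s t : Set α} (hs : s.Finite) (ht : t.Finite) :
    (s ∆ t).ncard + 2 * (s ∩ t).ncard = s.ncard + t.ncard := by
  have hdisj : Disjoint (s \ t) (t \ s) := disjoint_sdiff_sdiff
  rw [Set.symmDiff_def, Set.ncard_union_eq hdisj hs.sdiff ht.sdiff,
    ← Set.ncard_inter_add_ncard_sdiff_eq_ncard s t hs,
    ← Set.ncard_inter_add_ncard_sdiff_eq_ncard t s ht, Set.inter_comm t s]
  ring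

theorem List.Nodup.ncard_setOf_mem {l : List α} (hl : l.Nodup) :
    {a | a ∈ l}.ncard = l.length := by
  classical
  rw [← List.coe_toFinset, Set.ncard_coe_finset, List.toFinset_card_of_nodup hl]

theorem two_mul_ceil_half_le (n : ℕ) : 2 * (⌈(n : ℚ) / 2⌉ : ℚ) ≤ n + 1 := by
  have h : (⌈(n : ℚ) / 2⌉ : ℚ) < n / 2 + 1 := Int.ceil_lt_add_one _
  have h' : 2 * ⌈(n : ℚ) / 2⌉ < (n : ℤ) + 2 := by
    rw [← Int.cast_lt (R := ℚ)]
    push_cast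
    linarith
  exact_mod_cast (by omega : 2 * ⌈(n : ℚ) / 2⌉ ≤ (n : ℤ) + 1)

theorem two_mul_ceil_half_of_even {n : ℕ} (h : Even n) : 2 * (⌈(n : ℚ) / 2⌉ : ℚ) = n := by
  obtain ⟨m, rfl⟩ := h
  have : ((m + m : ℕ) : ℚ) / 2 = (m : ℤ) := by push_cast; ring
  rw [this, Int.ceil_intCast]
  push_cast
  ring

def List.IsAlternating (C : Set α) (l : List α) : Prop :=
  ∀ i (h : i < l.length), l[i] ∈ C ↔ Even i

namespace List.IsAlternating

variable {C : Set α} {l l₁ l₂ : List α}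

theorem of_prefix (hl : l.IsAlternating C) (hpre : l₁ <+: l) : l₁.IsAlternating C :=
  fun i h ↦ by rw [hpre.getElem h]; exact hl i (h.trans_le hpre.length_le)

theorem append_iff :
    (l₁ ++ l₂).IsAlternating C ↔
      l₁.IsAlternating C ∧
        ∀ i (h : i < l₂.length), l₂[i] ∈ C ↔ Even (l₁.length + i) := by
  refine ⟨fun h ↦ ⟨fun i hi ↦ ?_, fun i hi ↦ ?_⟩, fun ⟨h₁, h₂⟩ i hi ↦ ?_⟩
  · have := h i (by simp; omega)
    rwa [List.getElem_append_left hi] at this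
  · have := h (l₁.length + i) (by simp; omega)
    rw [List.getElem_append_right (by omega)] at this
    simpa using this
  · rcases lt_or_ge i l₁.length with hi₁ | hi₁
    · rw [List.getElem_append_left hi₁]; exact h₁ i hi₁
    · rw [List.getElem_append_right hi₁, h₂ _ (by simp at hi; omega),
        Nat.add_sub_cancel' hi₁]

theorem concat_iff {e : α} :
    (l ++ [e]).IsAlternating C ↔ l.IsAlternating C ∧ (e ∈ C ↔ Even l.length) := by
  simp [append_iff]

theorem reverse (hl : l.IsAlternating C) (ho : Odd l.length) : l.reverse.IsAlternating C := by
  intro i hi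
  rw [List.getElem_reverse, hl]
  simp only [List.length_reverse] at hi
  obtain ⟨k, hk⟩ := ho
  constructor <;> rintro ⟨m, hm⟩
  · exact ⟨k - m, by omega⟩
  · exact ⟨k - m, by omega⟩

theorem append_cons_reverse {e : α} (h₁ : l₁.IsAlternating C) (h₂ : l₂.IsAlternating C)
    (ho₁ : Odd l₁.length) (ho₂ : Odd l₂.length) (he : e ∉ C) :
    (l₁ ++ e :: l₂.reverse).IsAlternating C := by
  refine append_iff.2 ⟨h₁, fun i hi ↦ ?_⟩
  cases i with
  | zero => simpa [he] using ho₁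
  | succ i =>
    have := Nat.not_even_iff_odd.2 ho₁
    rw [List.getElem_cons_succ, h₂.reverse ho₂, ← add_assoc, Nat.even_add_one, Nat.even_add]
    tauto

theorem two_mul_length_filter [DecidablePred (· ∈ C)] (hl : l.IsAlternating C) :
    2 * (l.filter (· ∈ C)).length = l.length + l.length % 2 := by
  induction l using List.twoStepInduction with
  | nil => simp
  | singleton a =>
    have ha : a ∈ C := (hl 0 (by simp)).2 Even.zero
    simp [ha]
  | cons_cons a b t ih _ =>
    have ha : a ∈ C := (hl 0 (by simp)).2 Even.zero
    have hb : b ∉ C := fun h ↦ Nat.not_even_one ((hl 1 (by simp)).1 h)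
    have ht : t.IsAlternating C := fun i hi ↦
      (hl (i + 2) (by simp; omega)).trans (by simp [Nat.even_add])
    have := ih ht
    simp only [List.filter_cons, ha, hb, decide_true, decide_false, if_true, if_false,
      Bool.false_eq_true, List.length_cons]
    omega

end List.IsAlternating

end

section

omit [Fintype V] [DecidableEq V]

variable {G : SimpleGraph V} {C : Set (Sym2 V)} {κ : ℕ}

namespace SimpleGraph.Walk

theorem IsPath.eq_of_start_mem_of_mem_edges {u v : V} {p : G.Walk u v} (hp : p.IsPath)
    {e f : Sym2 V} (he : e ∈ p.edges) (hf : f ∈ p.edges) (hue : u ∈ e) (huf : u ∈ f) :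
    e = f := by
  obtain ⟨a, rfl⟩ := Sym2.mem_iff_exists.1 hue
  obtain ⟨b, rfl⟩ := Sym2.mem_iff_exists.1 huf
  rw [hp.eq_snd_of_mem_edges he, hp.eq_snd_of_mem_edges hf]

theorem length_takeUntil_add_length_dropUntil [DecidableEq V] {u v w : V} (p : G.Walk u v)
    (hw : w ∈ p.support) : (p.takeUntil w hw).length + (p.dropUntil w hw).length = p.length := by
  rw [← length_append, take_spec]

theorem exists_isCycle_odd_length_le {u : V} (c : G.Walk u u) (hc : Odd c.length) :
    ∃ (v : V) (d : G.Walk v v), d.IsCycle ∧ Odd d.length ∧ d.length ≤ c.length := by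
  induction hn : c.length using Nat.strong_induction_on generalizing u with
  | _ n ih =>
  subst hn
  cases c with
  | nil => simp at hc
  | @cons _ v _ h p =>
    by_cases hp : p.IsPath
    · refine ⟨u, _, (cons_isCycle_iff p h).2 ⟨hp, fun he ↦ ?_⟩, hc, le_rfl⟩
      have := hp.length_eq_one_of_mem_edges (Sym2.eq_swap ▸ he)
      simp [this, Nat.odd_iff] at hc
    · obtain ⟨x, w, ⟨ru, rv, rfl⟩, hw⟩ :
          ∃ (x : V) (w : G.Walk x x), w.IsSubwalk p ∧ ¬w.Nil := by
        simpa [isPath_iff_isSubwalk_imp_nil] using hp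
      -- cutting the closed subwalk `w` out of `c` leaves the closed walk `c'`; one of them is odd
      have hw₁ : 0 < w.length := not_nil_iff_lt_length.1 hw
      set c' : G.Walk u u := cons h (ru.append rv)
      have hlen : (cons h ((ru.append w).append rv)).length = w.length + c'.length := by
        simp only [c', length_cons, length_append]; ring
      have hc'₁ : 0 < c'.length := by simp [c']
      rcases Nat.even_or_odd w.length with hwe | hwo
      · have hc' : Odd c'.length := by rw [hlen] at hc; exact (Nat.odd_add'.1 hc).2 hwe
        obtain ⟨v, d, hd, hdo, hdl⟩ := ih _ (by omega) c' hc' rfl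
        exact ⟨v, d, hd, hdo, by omega⟩
      · obtain ⟨v, d, hd, hdo, hdl⟩ := ih _ (by omega) w hwo rfl
        exact ⟨v, d, hd, hdo, by omega⟩

end SimpleGraph.Walk

open Walk

theorem isInterchanging_iff {u v : V} {p : G.Walk u v} :
    IsInterchanging G C p ↔ p.IsPath ∧ IsLoose C u ∧ p.edges.IsAlternating C := by
  refine and_congr_right fun _ ↦ and_congr_right fun _ ↦ ⟨fun ⟨h₀, hs⟩ i ↦ ?_,
    fun h ↦ ⟨fun hi ↦ (h 0 hi).2 Even.zero, fun i _ ↦ ?_⟩⟩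
  · induction i with
    | zero => exact fun hi ↦ ⟨fun _ ↦ Even.zero, fun _ ↦ h₀ hi⟩
    | succ i ih =>
      intro hi
      have := hs i hi
      rw [Nat.even_add_one, ← ih (by omega)]
      tauto
  · rw [h i, h (i + 1), Nat.even_add_one]
    tauto

theorem IsInterchanging.takeUntil [DecidableEq V] {u v w : V} {p : G.Walk u v}
    (hp : IsInterchanging G C p) (hw : w ∈ p.support) :
    IsInterchanging G C (p.takeUntil w hw) := by
  obtain ⟨hpath, hu, halt⟩ := isInterchanging_iff.1 hp
  exact isInterchanging_iff.2
    ⟨hpath.takeUntil hw, hu, halt.of_prefix (p.edges_takeUntil_prefix_edges hw)⟩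

theorem isInterchanging_concat_iff {x u v : V} {q : G.Walk x u} (h : G.Adj u v) :
    IsInterchanging G C (q.concat h) ↔
      IsInterchanging G C q ∧ v ∉ q.support ∧ (s(u, v) ∈ C ↔ Even q.length) := by
  simp only [isInterchanging_iff, concat_isPath_iff, edges_concat, List.concat_eq_append,
    List.IsAlternating.concat_iff, length_edges]
  tauto

theorem IsInterchanging.append_cons_reverse {x y u v : V} {P : G.Walk x u} {Q : G.Walk y v}
    (hP : IsInterchanging G C P) (hQ : IsInterchanging G C Q) (hPo : Odd P.length)
    (hQo : Odd Q.length) (huv : G.Adj u v) (hnc : s(u, v) ∉ C)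
    (hdisj : ∀ w ∈ P.support, w ∉ Q.support) :
    IsInterchanging G C (P.append (cons huv Q.reverse)) := by
  obtain ⟨hPpath, hx, hPalt⟩ := isInterchanging_iff.1 hP
  obtain ⟨hQpath, -, hQalt⟩ := isInterchanging_iff.1 hQ
  refine isInterchanging_iff.2 ⟨IsPath.mk' ?_, hx, ?_⟩
  · rw [support_append, support_cons, List.tail_cons, List.nodup_append]
    refine ⟨hPpath.support_nodup, hQpath.reverse.support_nodup, fun a ha b hb hab ↦ ?_⟩
    rw [support_reverse, List.mem_reverse] at hb
    exact hdisj a ha (hab ▸ hb)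
  · rw [edges_append, edges_cons, edges_reverse]
    exact hPalt.append_cons_reverse hQalt (by simpa using hPo) (by simpa using hQo) hnc

theorem IsTight.eq_of_mem {z : V} (hz : IsTight C z) {e f : Sym2 V} (he : e ∈ C) (hf : f ∈ C)
    (hze : z ∈ e) (hzf : z ∈ f) : e = f := by
  obtain ⟨g, hg⟩ := Set.ncard_eq_one.1 hz
  have heg : e ∈ ({g} : Set (Sym2 V)) := hg ▸ ⟨he, hze⟩
  have hfg : f ∈ ({g} : Set (Sym2 V)) := hg ▸ ⟨hf, hzf⟩
  exact heg.trans hfg.symm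

theorem IsEdgeCover.exists_mem_sdiff_of_isLoose (hC : IsEdgeCover G C) {z : V}
    (hz : IsLoose C z) {S : Set (Sym2 V)}
    (hS : ∀ e ∈ S, ∀ f ∈ S, z ∈ e → z ∈ f → e = f) :
    ∃ e ∈ C \ S, z ∈ e := by
  by_contra! h
  obtain ⟨e, he, hze⟩ := hC.2 z
  have hmemS : ∀ f ∈ C, z ∈ f → f ∈ S := fun f hf hzf ↦
    by_contra fun hfS ↦ h f ⟨hf, hfS⟩ hzf
  refine hz ?_
  rw [IsTight, Set.ncard_eq_one]
  exact ⟨e, Set.eq_singleton_iff_unique_mem.2 ⟨⟨he, hze⟩, fun f ⟨hf, hzf⟩ ↦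
    hS f (hmemS f hf hzf) e (hmemS e he hze) hzf hze⟩⟩

theorem IsInterchanging.isEdgeCover_symmDiff {x y : V} {R : G.Walk x y} (hC : IsEdgeCover G C)
    (hR : IsInterchanging G C R) (hy : IsLoose C y) :
    IsEdgeCover G (C ∆ {e | e ∈ R.edges}) := by
  obtain ⟨hpath, hx, halt⟩ := isInterchanging_iff.1 hR
  refine ⟨fun e he ↦ ?_, fun z ↦ ?_⟩
  · rcases he with ⟨he, -⟩ | ⟨he, -⟩
    exacts [hC.1 he, R.edges_subset_edgeSet he]
  by_cases hz : z ∈ R.support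
  swap
  · obtain ⟨e, he, hze⟩ := hC.2 z
    exact ⟨e, Or.inl ⟨he, fun heR ↦ hz (R.mem_support_of_mem_edges heR hze)⟩, hze⟩
  obtain ⟨m, rfl, hm⟩ := mem_support_iff_exists_getVert.1 hz
  rcases Nat.eq_zero_or_pos m with rfl | hm₀
  · obtain ⟨e, he, hxe⟩ := hC.exists_mem_sdiff_of_isLoose hx
      fun e he f hf ↦ hpath.eq_of_start_mem_of_mem_edges he hf
    exact ⟨e, Or.inl he, by rwa [getVert_zero]⟩
  rcases hm.eq_or_lt with rfl | hmn
  · obtain ⟨e, he, hye⟩ := hC.exists_mem_sdiff_of_isLoose hy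
      fun e he f hf ↦ hpath.reverse.eq_of_start_mem_of_mem_edges
        (by rw [edges_reverse, List.mem_reverse]; exact he)
        (by rw [edges_reverse, List.mem_reverse]; exact hf)
    exact ⟨e, Or.inl he, by rwa [getVert_length]⟩
  -- an interior vertex lies on two consecutive edges of `R`, exactly one of which is not in `C`
  obtain ⟨k, rfl⟩ : ∃ k, m = k + 1 := ⟨m - 1, by omega⟩
  have h₁ : k < R.edges.length := by simp; omega
  have h₂ : k + 1 < R.edges.length := by simp; omega
  by_cases hk : R.edges[k] ∈ C
  · refine ⟨R.edges[k + 1], Or.inr ⟨List.getElem_mem _, ?_⟩, ?_⟩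
    · rw [halt _ h₂, Nat.even_add_one, ← halt _ h₁]
      exact not_not.2 hk
    · rw [getElem_edges]
      exact Sym2.mem_mk_left _ _
  · refine ⟨R.edges[k], Or.inr ⟨List.getElem_mem _, hk⟩, ?_⟩
    rw [getElem_edges]
    exact Sym2.mem_mk_right _ _

theorem IsInterchanging.not_isLoose_of_odd [Finite V] {x y : V} {R : G.Walk x y}
    (hC : IsEdgeCover G C) (hmin : ∀ C' : Set (Sym2 V), IsEdgeCover G C' → C.ncard ≤ C'.ncard)
    (hR : IsInterchanging G C R) (hodd : Odd R.length) : ¬ IsLoose C y := by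
  classical
  intro hy
  obtain ⟨hpath, -, halt⟩ := isInterchanging_iff.1 hR
  have hnodup := hpath.isTrail.edges_nodup
  have hS : {e | e ∈ R.edges}.ncard = R.length := by
    rw [hnodup.ncard_setOf_mem, length_edges]
  have hCS : 2 * (C ∩ {e | e ∈ R.edges}).ncard = R.length + 1 := by
    have : C ∩ {e | e ∈ R.edges} = {e | e ∈ R.edges.filter (· ∈ C)} := by
      ext e
      simp [and_comm]
    rw [this, (hnodup.filter _).ncard_setOf_mem, halt.two_mul_length_filter, length_edges,
      Nat.odd_iff.1 hodd]
  have := hmin _ (hR.isEdgeCover_symmDiff hC hy)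
  have := Set.ncard_symmDiff_add_two_mul_ncard_inter C.toFinite {e | e ∈ R.edges}.toFinite
  omega

theorem intDist_le_length {u v : V} {p : G.Walk u v} (hp : IsInterchanging G C p) :
    intDist G C v ≤ p.length :=
  iInf_le_of_le u <| iInf_le_of_le p <| iInf_le _ hp

theorem exists_isInterchanging_length_eq {v : V} {a : ℕ} (ha : intDist G C v = a) :
    ∃ (u : V) (p : G.Walk u v), IsInterchanging G C p ∧ p.length = a := by
  have hdef : intDist G C v =
      ⨅ q : Σ u, {p : G.Walk u v // IsInterchanging G C p}, (q.2.1.length : ℕ∞) := by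
    simp only [intDist, iInf_subtype', iInf_sigma']
  rw [hdef] at ha
  have : Nonempty (Σ u, {p : G.Walk u v // IsInterchanging G C p}) := by
    by_contra hne
    rw [@iInf_of_empty _ _ _ (not_nonempty_iff.1 hne)] at ha
    exact ENat.top_ne_natCast a ha
  obtain ⟨⟨u, p, hp⟩, hq⟩ := ENat.exists_eq_iInf
    fun q : Σ u, {p : G.Walk u v // IsInterchanging G C p} ↦ (q.2.1.length : ℕ∞)
  exact ⟨u, p, hp, by rw [ha] at hq; exact_mod_cast hq⟩

theorem isTight_of_intDist_ne_zero {v : V} (h : intDist G C v ≠ 0) : IsTight C v := by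
  by_contra hv
  have hnil : IsInterchanging G C (nil : G.Walk v v) :=
    isInterchanging_iff.2 ⟨IsPath.nil, hv, fun i hi ↦ by simp at hi⟩
  exact h (nonpos_iff_eq_zero.1 (by simpa using intDist_le_length hnil))

theorem intDist_le_sub_one_of_mem {u v : V} {a : ℕ} (huv : G.Adj u v) (hmem : s(u, v) ∈ C)
    (ha : intDist G C u = a) (hodd : Odd a) : intDist G C v ≤ (a - 1 : ℕ) := by
  obtain ⟨x, p, hp, hlen⟩ := exists_isInterchanging_length_eq ha
  have hnil : ¬ p.Nil := by rw [← length_eq_zero_iff, hlen]; exact hodd.pos.ne'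
  rw [← concat_dropLast (p.adj_penultimate hnil), isInterchanging_concat_iff] at hp
  obtain ⟨hq, -, hlast⟩ := hp
  have hqlen : p.dropLast.length = a - 1 := by rw [length_dropLast, hlen]
  have hlastC : s(p.penultimate, u) ∈ C :=
    hlast.2 (by rw [hqlen]; exact Nat.Odd.sub_odd hodd odd_one)
  -- `u` is tight, so its last edge on `p` is its only edge in `C`, namely `uv`
  have htight : IsTight C u := isTight_of_intDist_ne_zero (G := G) (by simp [ha, hodd.pos.ne'])
  have hv : p.penultimate = v := by
    have := htight.eq_of_mem hlastC hmem (Sym2.mem_mk_right _ _) (Sym2.mem_mk_left _ _)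
    rwa [Sym2.eq_swap, Sym2.congr_right] at this
  subst hv
  exact hqlen ▸ intDist_le_length hq

theorem intDist_le_add_one_of_not_mem {u v : V} {a : ℕ} (huv : G.Adj u v) (hnc : s(u, v) ∉ C)
    (ha : intDist G C u = a) (hodd : Odd a) : intDist G C v ≤ (a + 1 : ℕ) := by
  classical
  obtain ⟨x, p, hp, hlen⟩ := exists_isInterchanging_length_eq ha
  by_cases hv : v ∈ p.support
  · refine (intDist_le_length (hp.takeUntil hv)).trans ?_
    exact_mod_cast (p.length_takeUntil_le_length hv).trans (by omega)
  · have hpv : IsInterchanging G C (p.concat huv) :=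
      (isInterchanging_concat_iff huv).2
        ⟨hp, hv, by simp [hnc, hlen, Nat.not_even_iff_odd, hodd]⟩
    simpa [hlen] using intDist_le_length hpv

theorem intDist_le_add_one {u v : V} {a : ℕ} (huv : G.Adj u v) (ha : intDist G C u = a)
    (hodd : Odd a) : intDist G C v ≤ (a + 1 : ℕ) := by
  by_cases hmem : s(u, v) ∈ C
  · exact (intDist_le_sub_one_of_mem huv hmem ha hodd).trans (by exact_mod_cast by omega)
  · exact intDist_le_add_one_of_not_mem huv hmem ha hodd

theorem IsInterchanging.exists_odd_of_even {y w : V} {Q : G.Walk y w}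
    (hQ : IsInterchanging G C Q) (hQe : Even Q.length) (hw : ¬ IsLoose C w) :
    ∃ (z : V) (Q' : G.Walk y z), G.Adj w z ∧ s(w, z) ∉ C ∧ IsInterchanging G C Q' ∧
      Odd Q'.length ∧ Q'.length + 1 = Q.length := by
  have hnil : ¬ Q.Nil := fun hnil ↦ hw (hnil.eq ▸ hQ.2.1)
  have hQ' := hQ
  rw [← concat_dropLast (Q.adj_penultimate hnil), isInterchanging_concat_iff] at hQ'
  obtain ⟨hQ', -, hlast⟩ := hQ'
  have hlen := length_dropLast_add_one hnil
  have hodd : Odd Q.dropLast.length := by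
    rcases hQe with ⟨m, hm⟩
    exact ⟨m - 1, by omega⟩
  refine ⟨_, _, (Q.adj_penultimate hnil).symm, fun h ↦ ?_, hQ', hodd, hlen⟩
  exact Nat.not_even_iff_odd.2 hodd (hlast.1 (Sym2.eq_swap ▸ h))

theorem two_mul_le_of_even_add_length_takeUntil [DecidableEq V]
    (hgirth : ∀ (w : V) (c : G.Walk w w), c.IsCycle → Odd c.length → 2 * κ + 1 ≤ c.length)
    {x y u v w : V} (huv : G.Adj u v) {P : G.Walk x u} {Q : G.Walk y v}
    (hPo : Odd P.length) (hQo : Odd Q.length) (hwP : w ∈ P.support) (hwQ : w ∈ Q.support)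
    (hpar : Even ((P.takeUntil w hwP).length + (Q.takeUntil w hwQ).length)) :
    2 * κ ≤ P.length + Q.length := by
  set c := (P.dropUntil w hwP).append (cons huv (Q.dropUntil w hwQ).reverse)
  have hPlen := P.length_takeUntil_add_length_dropUntil hwP
  have hQlen := Q.length_takeUntil_add_length_dropUntil hwQ
  have hclen : c.length = (P.dropUntil w hwP).length + (Q.dropUntil w hwQ).length + 1 := by
    simp only [c, length_append, length_cons, length_reverse]
    ring
  have hc : Odd c.length := by
    rw [Nat.odd_iff] at hPo hQo ⊢
    rw [Nat.even_iff] at hpar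
    omega
  obtain ⟨z, d, hd, hdo, hdc⟩ := c.exists_isCycle_odd_length_le hc
  have := hgirth z d hd hdo
  omega

theorem two_mul_le_length_add_length [Finite V] [DecidableEq V]
    (hgirth : ∀ (w : V) (c : G.Walk w w), c.IsCycle → Odd c.length → 2 * κ + 1 ≤ c.length)
    (hC : IsEdgeCover G C) (hmin : ∀ C' : Set (Sym2 V), IsEdgeCover G C' → C.ncard ≤ C'.ncard)
    {x y u v : V} (huv : G.Adj u v) (hnc : s(u, v) ∉ C) (P : G.Walk x u) (Q : G.Walk y v)
    (hP : IsInterchanging G C P) (hQ : IsInterchanging G C Q) (hPo : Odd P.length)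
    (hQo : Odd Q.length) : 2 * κ ≤ P.length + Q.length := by
  induction hn : P.length + Q.length using Nat.strong_induction_on generalizing x y u v with
  | _ n ih =>
  by_cases hcommon : ∃ w, w ∈ P.support ∧ w ∈ Q.support
  swap
  · simp only [not_exists, not_and] at hcommon
    have hW := hP.append_cons_reverse hQ hPo hQo huv hnc hcommon
    refine absurd hQ.2.1 (hW.not_isLoose_of_odd hC hmin ?_)
    simp only [length_append, length_cons, length_reverse]
    rw [Nat.odd_iff] at hPo hQo ⊢
    omega
  obtain ⟨w, hwP, hwQ⟩ := hcommon
  have hi := P.length_takeUntil_le_length hwP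
  have hj := Q.length_takeUntil_le_length hwQ
  rcases Nat.even_or_odd (P.takeUntil w hwP).length with hie | hio <;>
    rcases Nat.even_or_odd (Q.takeUntil w hwQ).length with hje | hjo
  · exact hn ▸ two_mul_le_of_even_add_length_takeUntil hgirth huv hPo hQo hwP hwQ (hie.add hje)
  · obtain ⟨z, P', hwz, hnc', hP', hP'o, hP'len⟩ := (hP.takeUntil hwP).exists_odd_of_even hie
      ((hQ.takeUntil hwQ).not_isLoose_of_odd hC hmin hjo)
    have := ih _ (by omega) hwz hnc' (Q.takeUntil w hwQ) P' (hQ.takeUntil hwQ) hP' hjo hP'o rfl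
    omega
  · obtain ⟨z, Q', hwz, hnc', hQ', hQ'o, hQ'len⟩ := (hQ.takeUntil hwQ).exists_odd_of_even hje
      ((hP.takeUntil hwP).not_isLoose_of_odd hC hmin hio)
    have := ih _ (by omega) hwz hnc' (P.takeUntil w hwP) Q' (hP.takeUntil hwP) hQ' hio hQ'o rfl
    omega
  · exact hn ▸
      two_mul_le_of_even_add_length_takeUntil hgirth huv hPo hQo hwP hwQ (hio.add_odd hjo)

theorem two_mul_le_add_of_odd_of_odd [Finite V]
    (hgirth : ∀ (w : V) (c : G.Walk w w), c.IsCycle → Odd c.length → 2 * κ + 1 ≤ c.length)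
    (hC : IsEdgeCover G C) (hmin : ∀ C' : Set (Sym2 V), IsEdgeCover G C' → C.ncard ≤ C'.ncard)
    {u v : V} {a b : ℕ} (huv : G.Adj u v) (ha : intDist G C u = a) (hb : intDist G C v = b)
    (hao : Odd a) (hbo : Odd b) : 2 * κ ≤ a + b := by
  classical
  by_cases hmem : s(u, v) ∈ C
  · have h₁ := intDist_le_sub_one_of_mem huv hmem ha hao
    have h₂ := intDist_le_sub_one_of_mem huv.symm (Sym2.eq_swap ▸ hmem) hb hbo
    rw [hb, Nat.cast_le] at h₁
    rw [ha, Nat.cast_le] at h₂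
    have := hao.pos
    omega
  · obtain ⟨x, P, hP, rfl⟩ := exists_isInterchanging_length_eq ha
    obtain ⟨y, Q, hQ, rfl⟩ := exists_isInterchanging_length_eq hb
    exact two_mul_le_length_add_length hgirth hC hmin huv hmem P Q hP hQ hao hbo

theorem yEC_of_even {v : V} {a : ℕ} (ha : intDist G C v = a) (haκ : a < κ) (hae : Even a) :
    yEC G C κ v = a / (2 * (κ + 1)) := by
  simp [yEC, ha, haκ, hae]

theorem yEC_of_odd {v : V} {a : ℕ} (ha : intDist G C v = a) (haκ : a < κ) (hao : Odd a) :
    yEC G C κ v = 1 - (a + 1) / (2 * (κ + 1)) := by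
  simp [yEC, ha, haκ, Nat.not_even_iff_odd.2 hao]

theorem yEC_of_le {v : V} (hv : (κ : ℕ∞) ≤ intDist G C v) :
    yEC G C κ v = ⌈(κ : ℚ) / 2⌉ / (κ + 1) := by
  simp [yEC, not_lt.2 hv]

theorem exists_intDist_eq_natCast_of_lt {v : V} (h : intDist G C v < κ) :
    ∃ a : ℕ, intDist G C v = a ∧ a < κ := by
  obtain ⟨a, ha⟩ := ENat.ne_top_iff_exists.1 (h.trans_le le_top).ne
  exact ⟨a, ha.symm, by rw [← ha] at h; exact_mod_cast h⟩

theorem yEC_add_yEC_le_one_of_even_of_odd {u v : V} {a b : ℕ} (huv : G.Adj u v)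
    (ha : intDist G C u = a) (hb : intDist G C v = b) (haκ : a < κ) (hbκ : b < κ)
    (hae : Even a) (hbo : Odd b) : yEC G C κ u + yEC G C κ v ≤ 1 := by
  have hab : (a : ℚ) ≤ b + 1 := by
    have := intDist_le_add_one huv.symm hb hbo
    rw [ha, Nat.cast_le] at this
    exact_mod_cast this
  rw [yEC_of_even ha haκ hae, yEC_of_odd hb hbκ hbo]
  have : (a : ℚ) / (2 * (κ + 1)) ≤ (b + 1) / (2 * (κ + 1)) := by gcongr
  linarith

theorem yEC_add_yEC_le_one_of_lt_of_lt [Finite V]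
    (hgirth : ∀ (w : V) (c : G.Walk w w), c.IsCycle → Odd c.length → 2 * κ + 1 ≤ c.length)
    (hC : IsEdgeCover G C) (hmin : ∀ C' : Set (Sym2 V), IsEdgeCover G C' → C.ncard ≤ C'.ncard)
    {u v : V} (huv : G.Adj u v) (hu : intDist G C u < κ) (hv : intDist G C v < κ) :
    yEC G C κ u + yEC G C κ v ≤ 1 := by
  obtain ⟨a, ha, haκ⟩ := exists_intDist_eq_natCast_of_lt hu
  obtain ⟨b, hb, hbκ⟩ := exists_intDist_eq_natCast_of_lt hv
  rcases Nat.even_or_odd a with hae | hao <;> rcases Nat.even_or_odd b with hbe | hbo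
  · rw [yEC_of_even ha haκ hae, yEC_of_even hb hbκ hbe, ← add_div,
      div_le_one (by positivity)]
    have : (a : ℚ) + b ≤ 2 * κ := by exact_mod_cast (by omega : a + b ≤ 2 * κ)
    linarith
  · exact yEC_add_yEC_le_one_of_even_of_odd huv ha hb haκ hbκ hae hbo
  · rw [add_comm]
    exact yEC_add_yEC_le_one_of_even_of_odd huv.symm hb ha hbκ haκ hbe hao
  · have := two_mul_le_add_of_odd_of_odd hgirth hC hmin huv ha hb hao hbo
    omega

theorem yEC_add_yEC_le_one_of_lt_of_le {u v : V} (huv : G.Adj u v) (hu : intDist G C u < κ)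
    (hv : κ ≤ intDist G C v) : yEC G C κ u + yEC G C κ v ≤ 1 := by
  obtain ⟨a, ha, haκ⟩ := exists_intDist_eq_natCast_of_lt hu
  have hceil := two_mul_ceil_half_le κ
  rw [yEC_of_le hv]
  rcases Nat.even_or_odd a with hae | hao
  · have : (a : ℚ) + 1 ≤ κ := by exact_mod_cast haκ
    rw [yEC_of_even ha haκ hae, div_add_div _ _ (by positivity) (by positivity),
      div_le_one (by positivity)]
    nlinarith
  · have hκ : κ = a + 1 := by
      have : (κ : ℕ∞) ≤ (a + 1 : ℕ) := hv.trans (intDist_le_add_one huv ha hao)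
      have : κ ≤ a + 1 := by exact_mod_cast this
      omega
    have hceil' := two_mul_ceil_half_of_even (hκ ▸ hao.add_one)
    have hκ' : (κ : ℚ) = a + 1 := by exact_mod_cast hκ
    rw [yEC_of_odd ha haκ hao, ← hκ']
    field_simp
    linarith

theorem yEC_add_yEC_le_one_of_le_of_le {u v : V} (hu : κ ≤ intDist G C u)
    (hv : κ ≤ intDist G C v) : yEC G C κ u + yEC G C κ v ≤ 1 := by
  rw [yEC_of_le hu, yEC_of_le hv, ← add_div, div_le_one (by positivity)]
  linarith [two_mul_ceil_half_le κ]

end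

theorem stmt4_general (κ : ℕ) (G : SimpleGraph V)
    (hgirth : ∀ (w : V) (c : G.Walk w w), c.IsCycle → Odd c.length → 2 * κ + 1 ≤ c.length)
    (C : Set (Sym2 V)) (hC : IsEdgeCover G C)
    (hmin : ∀ C' : Set (Sym2 V), IsEdgeCover G C' → C.ncard ≤ C'.ncard) :
    ∀ u v : V, G.Adj u v → yEC G C κ u + yEC G C κ v ≤ 1 := by
  intro u v huv
  rcases lt_or_ge (intDist G C u) κ with hu | hu <;>
    rcases lt_or_ge (intDist G C v) κ with hv | hv
  · exact yEC_add_yEC_le_one_of_lt_of_lt hgirth hC hmin huv hu hv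
  · exact yEC_add_yEC_le_one_of_lt_of_le huv hu hv
  · rw [add_comm]
    exact yEC_add_yEC_le_one_of_lt_of_le huv.symm hv hu
  · exact yEC_add_yEC_le_one_of_le_of_le hu hv

theorem stmt4 (κ : ℕ) (hκ : 0 < κ) (G : SimpleGraph V)
    (hiso : ∀ v : V, ∃ u : V, G.Adj v u)
    (hgirth : ∀ (w : V) (c : G.Walk w w), c.IsCycle → Odd c.length → 2 * κ + 1 ≤ c.length)
    (C : Set (Sym2 V)) (hC : IsEdgeCover G C)
    (hmin : ∀ C' : Set (Sym2 V), IsEdgeCover G C' → C.ncard ≤ C'.ncard) :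
    ∀ u v : V, G.Adj u v → yEC G C κ u + yEC G C κ v ≤ 1 :=
  stmt4_general κ G hgirth C hC hmin
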